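/- arXiv:2104.13910 — 3 statements merged into one kernel-verified Lean document; each statement's English description precedes it below -/
import Mathlib

section
/- No subsequence set for 1-genericity is hyperimmune: if I ⊆ ℕ is hyperimmune, then there is a 1-generic G with I ⊆ G, and hence G_I = ℕ is not 1-generic. -/
open Classical in
/-- Characteristic sequence of a set of naturals. -/
noncomputable def chi (G : Set ℕ) : ℕ → Bool := fun n => decide (n ∈ G)

/-- Initial segment of length `k` of the characteristic sequence of `G`. -/
noncomputable def seg (G : Set ℕ) (k : ℕ) : List Bool := (List.range k).map (chi G)

/-- `G` is 1-generic: for every c.e. set `W` of binary strings, some initial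
segment of `G` lies in `W` or has no extension in `W`. -/
def OneGeneric (G : Set ℕ) : Prop :=
  ∀ W : Set (List Bool), REPred (· ∈ W) →
    ∃ k, seg G k ∈ W ∨ ∀ τ : List Bool, seg G k <+: τ → τ ∉ W

/-- A set of strings is dense if every string has an extension in it. -/
def DenseStrings (W : Set (List Bool)) : Prop := ∀ σ : List Bool, ∃ τ ∈ W, σ <+: τ

/-- `G` is weak-1-generic: `G` meets every dense c.e. set of strings. -/
def WeakOneGeneric (G : Set ℕ) : Prop :=
  ∀ W : Set (List Bool), REPred (· ∈ W) → DenseStrings W → ∃ k, seg G k ∈ W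

/-- Principal function of `I` (increasing enumeration). -/
noncomputable def princ (I : Set ℕ) : ℕ → ℕ := Nat.nth (· ∈ I)

/-- `I` is hyperimmune: infinite and its principal function is majorized by
no computable function. -/
def Hyperimmune (I : Set ℕ) : Prop :=
  I.Infinite ∧ ∀ f : ℕ → ℕ, Computable f → ∃ n, f n < princ I n

/-- The `I`-subsequence `A_I` of `A`, as a set: `A_I(n) = A(P_I(n))`. -/
def subseq (A I : Set ℕ) : Set ℕ := {n | princ I n ∈ A}

/-- The `I`-subsequence of an infinite binary sequence. -/
noncomputable def subseqFun (X : ℕ → Bool) (I : Set ℕ) : ℕ → Bool :=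
  fun n => X (princ I n)

def ComputableSet (I : Set ℕ) : Prop := ComputablePred (· ∈ I)

/-- Partial functions recursive in an oracle `O`. -/
inductive RecursiveInOracle (O : ℕ →. ℕ) : (ℕ →. ℕ) → Prop
  | zero : RecursiveInOracle O (pure 0)
  | succ : RecursiveInOracle O ↑Nat.succ
  | left : RecursiveInOracle O ↑fun n : ℕ => n.unpair.1
  | right : RecursiveInOracle O ↑fun n : ℕ => n.unpair.2
  | oracle : RecursiveInOracle O O
  | pair {f g} : RecursiveInOracle O f → RecursiveInOracle O g →
      RecursiveInOracle O fun n => Nat.pair <$> f n <*> g n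
  | comp {f g} : RecursiveInOracle O f → RecursiveInOracle O g →
      RecursiveInOracle O fun n => g n >>= f
  | prec {f g} : RecursiveInOracle O f → RecursiveInOracle O g →
      RecursiveInOracle O (Nat.unpaired fun a n =>
        n.rec (f a) fun y IH => do { let i ← IH; g (Nat.pair a (Nat.pair y i)) })
  | rfind {f} : RecursiveInOracle O f →
      RecursiveInOracle O fun a => Nat.rfind fun n => (fun m => m = 0) <$> f (Nat.pair a n)

open Classical in
noncomputable def charFun (A : Set ℕ) : ℕ →. ℕ :=
  fun n => Part.some (if n ∈ A then 1 else 0)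

/-- `A` Turing-computes `B`. -/
def TuringComputes (A B : Set ℕ) : Prop := RecursiveInOracle (charFun A) (charFun B)

/-- The halting problem `∅′`. -/
def HaltingProblem : Set ℕ :=
  {n | ((Denumerable.ofNat Nat.Partrec.Code n).eval n).Dom}

/-- `I` is wild. -/
def Wild (I : Set ℕ) : Prop :=
  ¬ComputableSet I ∧ ∃ f : ℕ → ℕ, Computable f ∧ StrictMono f ∧
    (∀ n, (I ∩ Set.Ioo (f n) (f (n + 1))).Nonempty) ∧
    ¬Computable fun n => (I ∩ Set.Ioo (f n) (f (n + 1))).ncard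

/-- `I` is tame. -/
def Tame (I : Set ℕ) : Prop :=
  ¬ComputableSet I ∧ ∃ f : ℕ → ℕ, Computable f ∧ StrictMono f ∧
    (∀ n, (I ∩ Set.Ioo (f n) (f (n + 1))).Nonempty) ∧
    Computable fun n => (I ∩ Set.Ioo (f n) (f (n + 1))).ncard

/-- The string `ρ` meets `S`: some initial segment of `ρ` is in `S`. -/
def MeetsStr (ρ : List Bool) (S : Set (List Bool)) : Prop := ∃ σ ∈ S, σ <+: ρ

/-- The sequence `X` meets `S`: some initial segment of `X` is in `S`. -/
def MeetsSeq (X : ℕ → Bool) (S : Set (List Bool)) : Prop :=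
  ∃ k, (List.range k).map X ∈ S

/-- `l, t` are suitable for `S`. -/
def SuitableFor (S : Set (List Bool)) (l : ℕ → ℕ) (t : ℕ → List Bool) : Prop :=
  l 0 = 0 ∧ (∀ n, l (n + 1) = l n + (t n).length) ∧
    ∀ (X : ℕ → Bool) (n m : ℕ), m ≤ l n →
      MeetsStr ((List.range m).map X ++ t n) S

/-- The collection `D` has property `(*)`. -/
def HasStar (D : ℕ → Set (List Bool)) : Prop :=
  ∀ i, ∃ l t, SuitableFor (D i) l t ∧ ∀ n, ∃ j, D j =
    {s | ∃ (σ τ ρ : List Bool) (m : ℕ), m > n ∧ σ.length = l (2 * m) ∧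
      τ = t (2 * m) ∧ ρ = t (2 * m + 1) ∧ s = σ ++ τ ++ ρ}

/-- The `e`-th c.e. set of binary strings. -/
def ceSet (e : ℕ) : Set (List Bool) :=
  {σ | ((Denumerable.ofNat Nat.Partrec.Code e).eval (Encodable.encode σ)).Dom}

open Classical in
/-- The `I`-subsequence of a finite string. -/
noncomputable def subseqStr (τ : List Bool) (I : Set ℕ) : List Bool :=
  (List.range τ.length).filterMap fun k => if k ∈ I then τ[k]? else none


/-!
Build `G` by finite extension through strings that are `true` at every position in `I`, the
`e`-th step deciding the `e`-th c.e. set of strings `W`. Such a step is always possible: otherwise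
every string `σ 1^a` has an extension in `W`, and any such extension must put a `false` at some
position of `I`; searching for one yields a computable `F` such that every interval `[a, F a)`
meets `I`, and iterating `F` majorizes the principal function of `I`. Thus `G` is 1-generic and
contains `I`, so `G_I = ℕ`, which is not 1-generic: none of its initial segments contains a
`false`, yet each has an extension that does.
-/

open Nat.Partrec (Code)
open Nat.Partrec.Code

theorem REPred.comp {α β : Type*} [Primcodable α] [Primcodable β] {p : β → Prop}
    (hp : REPred p) {f : α → β} (hf : Computable f) : REPred fun a => p (f a) :=
  Partrec.comp hp hf

theorem REPred.exists_code {α : Type*} [Primcodable α] {p : α → Prop} (hp : REPred p) :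
    ∃ c : Code, ∀ a, p a ↔ (eval c (Encodable.encode a)).Dom := by
  obtain ⟨c, hc⟩ := Nat.Partrec.Code.exists_code.1 hp
  exact ⟨c, fun a => by simp [hc, Encodable.encodek, Part.assert]⟩

theorem REPred.exists_ceSet_eq {W : Set (List Bool)} (hW : REPred (· ∈ W)) :
    ∃ e, ceSet e = W := by
  obtain ⟨c, hc⟩ := hW.exists_code
  exact ⟨Encodable.encode c, Set.ext fun τ => by simp [ceSet, hc]⟩

theorem rePred_mem_ceSet (e : ℕ) : REPred (· ∈ ceSet e) :=
  (eval_part.comp (Computable.const _) Computable.encode).dom_re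

theorem REPred.exists_computable_choice {α β : Type*} [Primcodable α] [Primcodable β]
    {p : α → β → Prop} (hp : REPred fun x : α × β => p x.1 x.2) (htot : ∀ a, ∃ b, p a b) :
    ∃ f : α → β, Computable f ∧ ∀ a, p a (f a) := by
  obtain ⟨c, hc⟩ := hp.exists_code
  -- `q a ⟪b, k⟫ = some b` iff `p a b` is confirmed within `k` steps
  let q : α → ℕ → Option β := fun a n => (Encodable.decode n.unpair.1).bind fun b =>
    (evaln n.unpair.2 c (Encodable.encode (a, b))).map fun _ => b
  have hq : Computable₂ q := by
    refine Primrec.to_comp (Primrec.option_bind ?_ (Primrec.option_map ?_ ?_))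
    · exact Primrec.decode.comp (Primrec.fst.comp (Primrec.unpair.comp Primrec.snd))
    · exact primrec_evaln.comp (((Primrec.snd.comp (Primrec.unpair.comp (Primrec.snd.comp
        Primrec.fst))).pair (Primrec.const c)).pair (Primrec.encode.comp
          ((Primrec.fst.comp Primrec.fst).pair Primrec.snd)))
    · exact (Primrec.snd.comp Primrec.fst).to₂
  have hdom : ∀ a, (Nat.rfindOpt (q a)).Dom := by
    intro a
    obtain ⟨b, hb⟩ := htot a
    obtain ⟨v, hv⟩ := Part.dom_iff_mem.1 ((hc (a, b)).1 hb)
    obtain ⟨k, hk⟩ := evaln_complete.1 hv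
    exact Nat.rfindOpt_dom.2 ⟨Nat.pair (Encodable.encode b) k, b, by
      simp only [q, Nat.unpair_pair, Encodable.encodek, Option.bind_some, Option.mem_def.1 hk,
        Option.map_some, Option.mem_def]⟩
  refine ⟨fun a => (Nat.rfindOpt (q a)).get (hdom a),
    (Partrec.rfindOpt hq).of_eq_tot fun a => Part.get_mem _, fun a => ?_⟩
  obtain ⟨n, hn⟩ := Nat.rfindOpt_spec (Part.get_mem (hdom a))
  simp only [q, Option.mem_def, Option.bind_eq_some_iff, Option.map_eq_some_iff] at hn
  obtain ⟨b, -, v, hv, rfl⟩ := hn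
  exact (hc _).2 (Part.dom_iff_mem.2 ⟨v, evaln_sound hv⟩)

theorem Primrec.list_replicate {α : Type*} [Primcodable α] :
    Primrec₂ (List.replicate : ℕ → α → List α) :=
  (Primrec.list_map (Primrec.list_range.comp Primrec.fst) (Primrec.snd.comp Primrec.fst).to₂).of_eq
    fun x => by simp [List.map_const']

theorem Nat.exists_computable_nth_lt {p : ℕ → Prop} {F : ℕ → ℕ} (hF : Computable F)
    (hp : ∀ a, ∃ m, p m ∧ a ≤ m ∧ m < F a) :
    ∃ h : ℕ → ℕ, Computable h ∧ ∀ n, Nat.nth p n < h n := by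
  classical
  have hcount : ∀ n, n < Nat.count p (F^[n + 1] 0) := by
    intro n
    induction n with
    | zero =>
      obtain ⟨m, hm, -, hlt⟩ := hp 0
      exact (Nat.zero_le _).trans_lt (Nat.count_strict_mono hm hlt)
    | succ n ih =>
      obtain ⟨m, hm, hle, hlt⟩ := hp (F^[n + 1] 0)
      rw [Function.iterate_succ_apply']
      exact Nat.lt_of_le_of_lt (ih.trans_le (Nat.count_monotone p hle))
        (Nat.count_strict_mono hm hlt)
  refine ⟨fun n => F^[n + 1] 0, ?_, fun n => Nat.nth_lt_of_lt_count (hcount n)⟩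
  refine (Computable.nat_rec Computable.id (Computable.const (F 0))
    (hF.comp (Computable.snd.comp Computable.snd)).to₂).of_eq fun n => ?_
  induction n with
  | zero => rfl
  | succ n ih => rw [Function.iterate_succ_apply']; exact congrArg F ih

theorem Hyperimmune.exists_forall_notMem_Ico {I : Set ℕ} (hI : Hyperimmune I) {F : ℕ → ℕ}
    (hF : Computable F) : ∃ a, ∀ m ∈ I, m ∉ Set.Ico a (F a) := by
  by_contra! hmeet
  simp only [Set.mem_Ico] at hmeet
  obtain ⟨h, hh, hlt⟩ := Nat.exists_computable_nth_lt (p := (· ∈ I)) hF hmeet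
  obtain ⟨n, hn⟩ := hI.2 h hh
  exact (hlt n).not_gt hn

def TrueOn (I : Set ℕ) (σ : List Bool) : Prop := ∀ m ∈ I, σ[m]? ≠ some false

def Decides (W : Set (List Bool)) (τ : List Bool) : Prop := τ ∈ W ∨ ∀ ρ, τ <+: ρ → ρ ∉ W

theorem trueOn_nil (I : Set ℕ) : TrueOn I [] := by
  simp [TrueOn]

theorem TrueOn.append_replicate {I : Set ℕ} {σ : List Bool} (hσ : TrueOn I σ) (a : ℕ) :
    TrueOn I (σ ++ List.replicate a true) := by
  intro m hm
  rw [List.getElem?_append]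
  split_ifs
  · exact hσ m hm
  · simp [List.getElem?_replicate]

theorem Hyperimmune.exists_trueOn_decides {I : Set ℕ} (hI : Hyperimmune I)
    {W : Set (List Bool)} (hW : REPred (· ∈ W)) {σ : List Bool} (hσ : TrueOn I σ) :
    ∃ τ, σ <+: τ ∧ TrueOn I τ ∧ Decides W τ := by
  by_contra! hund
  simp only [Decides, not_or, not_forall, not_not] at hund
  have hpad : ∀ a, ∃ ρ, σ ++ List.replicate a true ++ ρ ∈ W := fun a => by
    obtain ⟨-, τ, ⟨ρ, rfl⟩, hτ⟩ := hund _ (List.prefix_append _ _) (hσ.append_replicate a)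
    exact ⟨ρ, hτ⟩
  have hre : REPred fun x : ℕ × List Bool => σ ++ List.replicate x.1 true ++ x.2 ∈ W :=
    hW.comp ((Primrec.list_append.comp (Primrec.list_append.comp (Primrec.const σ)
      (Primrec.list_replicate.comp Primrec.fst (Primrec.const true))) Primrec.snd).to_comp)
  obtain ⟨g, hg, hgW⟩ := hre.exists_computable_choice hpad
  obtain ⟨a, ha⟩ := hI.exists_forall_notMem_Ico (F := fun a => σ.length + a + (g a).length)
    (Primrec.nat_add.to_comp.comp (Primrec.nat_add.comp (Primrec.const _) Primrec.id).to_comp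
      (Primrec.list_length.to_comp.comp hg))
  refine (hund (σ ++ List.replicate a true ++ g a) ?_ ?_).1 (hgW a)
  · rw [List.append_assoc]; exact List.prefix_append _ _
  · intro m hm
    have hm' := ha m hm
    rw [Set.mem_Ico, not_and, not_lt] at hm'
    rcases lt_or_ge m (σ.length + a) with hlt | hge
    · rw [List.getElem?_append_left (by simpa using hlt)]
      exact hσ.append_replicate a m hm
    · rw [List.getElem?_eq_none (by simp; omega)]
      simp

def limitSet (s : ℕ → List Bool) : Set ℕ := {n | ∃ k, (s k)[n]? = some true}

theorem seg_getElem? (G : Set ℕ) {k n : ℕ} (hn : n < k) : (seg G k)[n]? = some (chi G n) := by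
  simp [seg, hn]

theorem List.IsPrefix.getElem?_eq {α : Type*} {l₁ l₂ : List α} (h : l₁ <+: l₂) {n : ℕ}
    (hn : n < l₁.length) : l₂[n]? = l₁[n]? := by
  rw [List.prefix_iff_getElem?.1 h n hn, List.getElem?_eq_getElem hn]

section Chain

variable {s : ℕ → List Bool}

theorem prefix_of_le_of_chain (hs : ∀ k, s k <+: s (k + 1)) {j k : ℕ} (hjk : j ≤ k) :
    s j <+: s k := by
  induction k, hjk using Nat.le_induction with
  | base => exact List.prefix_refl _
  | succ k _ ih => exact ih.trans (hs k)

theorem getElem?_eq_of_chain (hs : ∀ k, s k <+: s (k + 1)) {j k n : ℕ}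
    (hj : n < (s j).length) (hk : n < (s k).length) : (s j)[n]? = (s k)[n]? := by
  rcases le_total j k with hjk | hkj
  · exact ((prefix_of_le_of_chain hs hjk).getElem?_eq hj).symm
  · exact (prefix_of_le_of_chain hs hkj).getElem?_eq hk

theorem seg_limitSet (hs : ∀ k, s k <+: s (k + 1)) (k : ℕ) :
    seg (limitSet s) (s k).length = s k := by
  refine List.ext_getElem? fun n => ?_
  rcases lt_or_ge n (s k).length with hn | hn
  · have hmem : n ∈ limitSet s ↔ (s k)[n]? = some true :=
      ⟨fun ⟨j, hj⟩ => getElem?_eq_of_chain hs (List.getElem?_eq_some_iff.1 hj).1 hn ▸ hj,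
        fun h => ⟨k, h⟩⟩
    rw [List.getElem?_eq_getElem hn, Option.some_inj] at hmem
    rw [seg_getElem? _ hn, List.getElem?_eq_getElem hn]
    simp [chi, hmem]
  · rw [List.getElem?_eq_none (by simpa [seg]), List.getElem?_eq_none hn]

end Chain

theorem exists_oneGeneric_of_forall_exists_decides (P : List Bool → Prop) (hP₀ : P [])
    (hP : ∀ W : Set (List Bool), REPred (· ∈ W) → ∀ σ, P σ →
      ∃ τ, σ.length < τ.length ∧ σ <+: τ ∧ P τ ∧ Decides W τ) :
    ∃ G : Set ℕ, OneGeneric G ∧ ∀ n, ∃ σ, P σ ∧ n < σ.length ∧ seg G σ.length = σ := by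
  choose next hlen hpre hnext hdec using
    fun (e : ℕ) (σ : Subtype P) => hP (ceSet e) (rePred_mem_ceSet e) σ.1 σ.2
  let s : ℕ → Subtype P := fun k => Nat.rec ⟨[], hP₀⟩ (fun e σ => ⟨next e σ, hnext e σ⟩) k
  have hchain : ∀ k, (s k).1 <+: (s (k + 1)).1 := fun k => hpre k (s k)
  have hlen_ge : ∀ k, k ≤ (s k).1.length := by
    intro k
    induction k with
    | zero => exact Nat.zero_le _
    | succ k ih => exact Nat.succ_le_of_lt (ih.trans_lt (hlen k (s k)))
  have hseg := seg_limitSet (s := fun k => (s k).1) hchain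
  refine ⟨limitSet fun k => (s k).1, fun W hW => ?_, fun n => ?_⟩
  · obtain ⟨e, rfl⟩ := hW.exists_ceSet_eq
    refine ⟨(s (e + 1)).1.length, ?_⟩
    rw [hseg (e + 1)]
    exact hdec e (s e)
  · exact ⟨(s (n + 1)).1, (s (n + 1)).2, hlen_ge (n + 1), hseg (n + 1)⟩

theorem subset_of_forall_trueOn_seg {I G : Set ℕ}
    (hG : ∀ n, ∃ σ, TrueOn I σ ∧ n < σ.length ∧ seg G σ.length = σ) : I ⊆ G := by
  intro n hn
  obtain ⟨σ, hσ, hlt, hseg⟩ := hG n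
  have hn' := hσ n hn
  rw [← hseg, seg_getElem? G hlt] at hn'
  simpa [chi] using hn'

theorem not_oneGeneric_univ : ¬OneGeneric Set.univ := by
  intro h
  have hre : REPred (· ∈ {τ : List Bool | false ∈ τ}) :=
    ((PrimrecPred.exists_mem_list (Primrec.eq.comp Primrec.id (Primrec.const false))
      ).computablePred.to_re).of_eq fun τ => by simp
  obtain ⟨k, hk⟩ := h _ hre
  have hchi : chi Set.univ = fun _ => true := funext fun n => by simp [chi]
  have hseg : seg Set.univ k = List.replicate k true := by
    simp [seg, hchi, List.map_const']
  rw [hseg] at hk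
  rcases hk with hmem | havoid
  · simp at hmem
  · exact havoid _ (List.prefix_append _ [false]) (by simp)

theorem hyperimmune_not_subsequenceSet (I : Set ℕ) (hI : Hyperimmune I) :
    ∃ G : Set ℕ, OneGeneric G ∧ I ⊆ G ∧ subseq G I = Set.univ ∧
      ¬ OneGeneric (subseq G I) := by
  obtain ⟨G, hG, hseg⟩ := exists_oneGeneric_of_forall_exists_decides (TrueOn I) (trueOn_nil I)
    fun W hW σ hσ => by
      obtain ⟨τ, hpre, hτ, hdec⟩ := hI.exists_trueOn_decides hW (hσ.append_replicate 1)
      exact ⟨τ, by simpa using hpre.length_le, (List.prefix_append _ _).trans hpre, hτ, hdec⟩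
  have hIG : I ⊆ G := subset_of_forall_trueOn_seg hseg
  have hsub : subseq G I = Set.univ :=
    Set.eq_univ_of_forall fun n => hIG (Nat.nth_mem_of_infinite hI.1 n)
  exact ⟨G, hG, hIG, hsub, hsub ▸ not_oneGeneric_univ⟩
end

section
/- Suppose D = (S_i)_{i∈ω} is a countable collection of dense sets of binary strings having property (*). Then there exists a non-computable set I ⊆ ℕ such that for every X ∈ 2^ω meeting every S_i, the subsequence X_I also meets every S_i. -/
/-!
Choose, for each `i`, the functions `l i, t i` given by `(*)` and view `l i` as cutting `ℕ` into
blocks `[l i q, l i (q + 1))`, grouped in pairs `q = 2m, 2m + 1`. Pick positions `f 0 < f 1 < ⋯`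
so sparse that, for `i ≤ e < e'`, the pair of blocks of `l i` containing `f e` ends before `f e'`,
and let `I` omit exactly those `f e` at which the `e`-th partial computable function outputs `1`;
then `I` is not computable by diagonalization. Given `i`, all but finitely many pairs of blocks of
`l i` contain at most one `f e`, so one block of the pair lies inside `I`. Since `X` meets the set
`T_{i,N}` of `D`, some such pair is an initial segment of `X` followed by `t i (2m), t i (2m+1)`;
on the block inside `I` the subsequence `X_I` copies `t i q` verbatim right after a prefix of
length at most `l i q`, so by suitability `X_I` meets `D i`.
-/

theorem meetsSeq_of_meetsStr_map_range {X : ℕ → Bool} {S : Set (List Bool)} {k : ℕ}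
    (h : MeetsStr ((List.range k).map X) S) : MeetsSeq X S := by
  obtain ⟨σ, hσS, hσ⟩ := h
  have hle : σ.length ≤ k := by simpa using hσ.length_le
  have hσ_eq : σ = (List.range σ.length).map X := by
    conv_lhs => rw [List.prefix_iff_eq_take.1 hσ]
    rw [← List.map_take, List.take_range, min_eq_left hle]
  exact ⟨σ.length, hσ_eq ▸ hσS⟩

theorem apply_length_add_of_map_range_eq_append {α : Type*} {X : ℕ → α} {k : ℕ}
    {σ τ ρ : List α} (h : (List.range k).map X = σ ++ τ ++ ρ) (p : ℕ) (hp : p < τ.length) :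
    X (σ.length + p) = τ[p] := by
  have hk : σ.length + p < k := by
    have := congrArg List.length h
    simp only [List.length_map, List.length_range, List.length_append] at this
    omega
  calc X (σ.length + p) = ((List.range k).map X)[σ.length + p]'(by simpa using hk) := by simp
    _ = (σ ++ τ ++ ρ)[σ.length + p]'(by rw [← h]; simpa using hk) := List.getElem_of_eq h _
    _ = τ[p] := by
      rw [List.getElem_append_left (by simpa using hp), List.getElem_append_right (by omega)]
      simp

theorem nth_count_add_of_forall {P : ℕ → Prop} [DecidablePred P] {a p : ℕ}
    (hP : ∀ q ≤ p, P (a + q)) : Nat.nth P (Nat.count P a + p) = a + p := by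
  have hcount : Nat.count P (a + p) = Nat.count P a + p := by
    rw [Nat.count_add, Nat.count_of_forall fun q hq => hP q hq.le]
  rw [← hcount, Nat.nth_count (hP p le_rfl)]

theorem map_range_subseqFun_append {X : ℕ → Bool} {I : Set ℕ} [DecidablePred (· ∈ I)]
    {a : ℕ} {τ : List Bool} (hI : Set.Ico a (a + τ.length) ⊆ I)
    (hX : ∀ p (hp : p < τ.length), X (a + p) = τ[p]) :
    (List.range (Nat.count (· ∈ I) a)).map (subseqFun X I) ++ τ =
      (List.range (Nat.count (· ∈ I) a + τ.length)).map (subseqFun X I) := by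
  rw [List.range_add, List.map_append, List.map_map]
  congr 1
  refine List.ext_getElem (by simp) fun p hp _ => ?_
  have hnth := nth_count_add_of_forall (P := (· ∈ I)) (a := a) (p := p)
    fun q hq => hI ⟨Nat.le_add_right a q, by omega⟩
  simp [subseqFun, princ, hnth, hX p hp]

theorem SuitableFor.monotone {S : Set (List Bool)} {l : ℕ → ℕ} {t : ℕ → List Bool}
    (h : SuitableFor S l t) : Monotone l :=
  monotone_nat_of_le_succ fun n => h.2.1 n ▸ Nat.le_add_right _ _

/-- If the block `[l q, l (q + 1))` lies in `I` and `X` carries `t q` on it, then `X_I` carries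
`t q` right after its initial segment of length `count I (l q) ≤ l q`, so suitability applies. -/
theorem SuitableFor.meetsSeq_subseqFun {S : Set (List Bool)} {l : ℕ → ℕ} {t : ℕ → List Bool}
    (h : SuitableFor S l t) {X : ℕ → Bool} {I : Set ℕ} {q k : ℕ} {σ ρ : List Bool}
    (hI : Set.Ico (l q) (l (q + 1)) ⊆ I) (hX : (List.range k).map X = σ ++ t q ++ ρ)
    (hσ : σ.length = l q) : MeetsSeq (subseqFun X I) S := by
  classical
  have hcopy := map_range_subseqFun_append (h.2.1 q ▸ hI)
    fun p hp => hσ ▸ apply_length_add_of_map_range_eq_append hX p hp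
  have hmeets := h.2.2 (subseqFun X I) q _ (Nat.count_le (· ∈ I))
  rw [hcopy] at hmeets
  exact meetsSeq_of_meetsStr_map_range hmeets

theorem Set.Subsingleton.disjoint_Ico_or_disjoint_Ico {α : Type*} [LinearOrder α] {s : Set α}
    {a b c : α} (h : (s ∩ Set.Ico a c).Subsingleton) (hab : a ≤ b) (hbc : b ≤ c) :
    Disjoint s (Set.Ico a b) ∨ Disjoint s (Set.Ico b c) := by
  by_contra! hmeet
  obtain ⟨⟨x, hxs, hx⟩, ⟨y, hys, hy⟩⟩ :=
    And.imp Set.not_disjoint_iff.1 Set.not_disjoint_iff.1 hmeet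
  exact (hx.2.trans_le hy.1).ne
    (h ⟨hxs, hx.1, hx.2.trans_le hbc⟩ ⟨hys, hab.trans hy.1, hy.2⟩)

theorem Monotone.subsingleton_setOf_mem_Ico {g : ℕ → ℕ} (hg : Monotone g) (x : ℕ) :
    {m | x ∈ Set.Ico (g m) (g (m + 1))}.Subsingleton := by
  intro m hm m' hm'
  by_contra hne
  exact Set.disjoint_left.1 (hg.pairwise_disjoint_on_Ico_succ hne) hm hm'

open Classical in
noncomputable def nextAbove (g : ℕ → ℕ) (x : ℕ) : ℕ :=
  if h : ∃ m, x < g m then g (Nat.find h) else x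

theorem le_nextAbove {g : ℕ → ℕ} (hg : Monotone g) {m x : ℕ} (h : g m ≤ x) :
    g (m + 1) ≤ nextAbove g x := by
  unfold nextAbove
  split_ifs with hex
  · by_cases hm : g (m + 1) ≤ x
    · exact hm.trans (Nat.find_spec hex).le
    · refine hg (Nat.le_find_iff hex _ |>.2 fun k hk hxk => ?_)
      exact (hg (Nat.lt_succ_iff.1 hk)).trans h |>.not_gt hxk
  · exact not_lt.1 (not_exists.1 hex _)

noncomputable def sparseSeq (g : ℕ → ℕ → ℕ) : ℕ → ℕ
  | 0 => 0
  | e + 1 => max (sparseSeq g e + 1)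
      ((Finset.range (e + 1)).sup fun i => nextAbove (g i) (sparseSeq g e))

theorem sparseSeq_strictMono (g : ℕ → ℕ → ℕ) : StrictMono (sparseSeq g) :=
  strictMono_nat_of_lt_succ fun _ => Nat.lt_of_lt_of_le (Nat.lt_succ_self _) (le_max_left _ _)

theorem le_sparseSeq {g : ℕ → ℕ → ℕ} {i : ℕ} (hg : Monotone (g i)) {e e' m : ℕ} (hie : i ≤ e)
    (hee' : e < e') (h : g i m ≤ sparseSeq g e) : g i (m + 1) ≤ sparseSeq g e' :=
  calc g i (m + 1) ≤ nextAbove (g i) (sparseSeq g e) := le_nextAbove hg h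
    _ ≤ (Finset.range (e + 1)).sup fun i => nextAbove (g i) (sparseSeq g e) :=
      Finset.le_sup (f := fun i => nextAbove (g i) (sparseSeq g e))
        (Finset.mem_range.2 (Nat.lt_succ_of_le hie))
    _ ≤ sparseSeq g (e + 1) := le_max_right _ _
    _ ≤ sparseSeq g e' := (sparseSeq_strictMono g).monotone hee'

/-- The finitely many `sparseSeq g e` with `e < i` lie in finitely many blocks of `g i`; any other
two values lie in different blocks by `le_sparseSeq`. -/
theorem exists_subsingleton_range_sparseSeq_inter_Ico {g : ℕ → ℕ → ℕ} {i : ℕ}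
    (hg : Monotone (g i)) :
    ∃ N, ∀ m > N, (Set.range (sparseSeq g) ∩ Set.Ico (g i m) (g i (m + 1))).Subsingleton := by
  set f := sparseSeq g
  have hfin : {m | ∃ e < i, f e ∈ Set.Ico (g i m) (g i (m + 1))}.Finite := by
    have hunion : {m | ∃ e < i, f e ∈ Set.Ico (g i m) (g i (m + 1))} =
        ⋃ e ∈ Set.Iio i, {m | f e ∈ Set.Ico (g i m) (g i (m + 1))} := by
      ext m
      simp only [Set.mem_ofPred_eq, Set.mem_iUnion, Set.mem_Iio, exists_prop]
    rw [hunion]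
    exact (Set.finite_Iio i).biUnion fun e _ => (hg.subsingleton_setOf_mem_Ico (f e)).finite
  obtain ⟨N, hN⟩ := hfin.bddAbove
  refine ⟨N, fun m hm => ?_⟩
  have hi : ∀ {e}, f e ∈ Set.Ico (g i m) (g i (m + 1)) → i ≤ e := fun he =>
    not_lt.1 fun hei => (hN ⟨_, hei, he⟩).not_gt hm
  have hne : ∀ {e e'}, e < e' → f e ∈ Set.Ico (g i m) (g i (m + 1)) →
      f e' ∉ Set.Ico (g i m) (g i (m + 1)) := fun hee' he he' =>
    (le_sparseSeq hg (hi he) hee' he.1).not_gt he'.2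
  rintro _ ⟨⟨e, rfl⟩, he⟩ _ ⟨⟨e', rfl⟩, he'⟩
  rcases lt_trichotomy e e' with hee' | rfl | he'e
  · exact absurd he' (hne hee' he)
  · rfl
  · exact absurd he (hne he'e he')

def diagonalSet (f : ℕ → ℕ) : Set ℕ :=
  f '' {e | (Denumerable.ofNat Nat.Partrec.Code e).eval (f e) = Part.some 1}

theorem not_computableSet_compl_diagonalSet {f : ℕ → ℕ} (hf : Function.Injective f) :
    ¬ComputableSet (diagonalSet f)ᶜ := by
  rintro ⟨_, hcomp⟩
  obtain ⟨c, hc⟩ := Nat.Partrec.Code.exists_code.1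
    (Partrec.nat_iff.1 (Computable.encode.comp hcomp).partrec)
  have hmem : f (Encodable.encode c) ∈ diagonalSet f ↔
      c.eval (f (Encodable.encode c)) = Part.some 1 := by
    rw [diagonalSet, hf.mem_set_image, Set.mem_ofPred_eq, Denumerable.ofNat_encode]
  rw [hc] at hmem
  by_cases h : f (Encodable.encode c) ∈ diagonalSet f <;> simp [h] at hmem

theorem hasStar_subsequenceSet_general (D : ℕ → Set (List Bool))
    (hstar : HasStar D) :
    ∃ I : Set ℕ, ¬ ComputableSet I ∧
      ∀ X : ℕ → Bool, (∀ i, MeetsSeq X (D i)) →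
        ∀ i, MeetsSeq (subseqFun X I) (D i) := by
  choose l t hsuit hT using hstar
  set f := sparseSeq fun i m => l i (2 * m)
  refine ⟨(diagonalSet f)ᶜ, not_computableSet_compl_diagonalSet (sparseSeq_strictMono _).injective,
    fun X hX i => ?_⟩
  have hl := (hsuit i).monotone
  obtain ⟨N, hN⟩ := exists_subsingleton_range_sparseSeq_inter_Ico (g := fun i m => l i (2 * m))
    (i := i) (hl.comp fun _ _ h => by omega)
  obtain ⟨j, hj⟩ := hT i N
  obtain ⟨k, hk⟩ := hX j
  rw [hj] at hk
  obtain ⟨σ, _, _, m, hm, hσ, rfl, rfl, hk⟩ := hk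
  have hfree := (hN m hm).disjoint_Ico_or_disjoint_Ico (hl (by omega : 2 * m ≤ 2 * m + 1))
    (hl (by omega : 2 * m + 1 ≤ 2 * (m + 1)))
  rcases hfree with hfree | hfree
  · exact (hsuit i).meetsSeq_subseqFun
      (hfree.mono_left (Set.image_subset_range _ _)).subset_compl_left hk hσ
  · exact (hsuit i).meetsSeq_subseqFun (q := 2 * m + 1)
      (hfree.mono_left (Set.image_subset_range _ _)).subset_compl_left
      (hk.trans (List.append_nil _).symm) (by rw [List.length_append, hσ, (hsuit i).2.1])

theorem hasStar_subsequenceSet (D : ℕ → Set (List Bool))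
    (hD : ∀ i, DenseStrings (D i)) (hstar : HasStar D) :
    ∃ I : Set ℕ, ¬ ComputableSet I ∧
      ∀ X : ℕ → Bool, (∀ i, MeetsSeq X (D i)) →
        ∀ i, MeetsSeq (subseqFun X I) (D i) :=
  hasStar_subsequenceSet_general D hstar
end

section
/- There exist uniformly partial computable sequences of functions (t_e) and (l_e) such that whenever W_e is a dense set of strings, t_e and l_e are total and suitable for W_e. -/
/-!
Given `l_e(n) = L`, search, dovetailing over candidate strings `t` and stages `s`, for a `t`
such that every string of length at most `L` followed by `t` has an initial segment enumerated
into `W_e` by stage `s`; then `t_e(n) = t` and `l_e(n + 1) = L + |t|`. The search condition is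
suitability at `n`. When `W_e` is dense such a `t` exists: extend the finitely many strings of
length at most `L` into `W_e` one after another. Hence every search halts and both functions
are total.
-/

open Nat.Partrec (Code)

theorem meetsStr_iff_exists_take {ρ : List Bool} {S : Set (List Bool)} :
    MeetsStr ρ S ↔ ∃ m ∈ List.range (ρ.length + 1), ρ.take m ∈ S := by
  constructor
  · rintro ⟨σ, hσ, hpre⟩
    exact ⟨σ.length, List.mem_range.mpr (Nat.lt_succ_of_le hpre.length_le),
      List.prefix_iff_eq_take.mp hpre ▸ hσ⟩
  · rintro ⟨m, -, hm⟩
    exact ⟨_, hm, List.take_prefix m ρ⟩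

theorem MeetsStr.append {ρ : List Bool} {S : Set (List Bool)} (h : MeetsStr ρ S)
    (τ : List Bool) : MeetsStr (ρ ++ τ) S :=
  let ⟨σ, hσ, hpre⟩ := h
  ⟨σ, hσ, hpre.trans (List.prefix_append ρ τ)⟩

theorem MeetsStr.mono {ρ : List Bool} {S S' : Set (List Bool)} (h : MeetsStr ρ S)
    (hS : S ⊆ S') : MeetsStr ρ S' :=
  let ⟨σ, hσ, hpre⟩ := h
  ⟨σ, hS hσ, hpre⟩

/-- Handle the strings one at a time: a further extension keeps the earlier ones meeting `W`. -/
theorem DenseStrings.exists_forall_meetsStr_append {W : Set (List Bool)} (hW : DenseStrings W)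
    (A : List (List Bool)) : ∃ t, ∀ σ ∈ A, MeetsStr (σ ++ t) W := by
  induction A with
  | nil => exact ⟨[], by simp⟩
  | cons σ A ih =>
    obtain ⟨t, ht⟩ := ih
    obtain ⟨ρ, hρ, u, rfl⟩ := hW (σ ++ t)
    refine ⟨t ++ u, ?_⟩
    rintro τ (_ | ⟨_, hτ⟩)
    · exact ⟨_, hρ, by simp⟩
    · simpa using (ht τ hτ).append u

theorem Monotone.exists_forall_meetsStr {W : ℕ → Set (List Bool)} (hW : Monotone W)
    {A : List (List Bool)} (hA : ∀ σ ∈ A, MeetsStr σ (⋃ s, W s)) :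
    ∃ s, ∀ σ ∈ A, MeetsStr σ (W s) := by
  have hev : ∀ σ ∈ A, ∀ᶠ s in Filter.atTop, MeetsStr σ (W s) := by
    intro σ hσ
    obtain ⟨ρ, hρ, hpre⟩ := hA σ hσ
    obtain ⟨s, hs⟩ := Set.mem_iUnion.mp hρ
    exact Filter.eventually_atTop.mpr ⟨s, fun s' hs' => ⟨ρ, hW hs' hs, hpre⟩⟩
  exact ((Filter.eventually_all_finite A.finite_toSet).mpr hev).exists

/-- `W_{e,s}`: the strings on which the `e`-th program halts within `s` steps. -/
def ceSetStage (e s : ℕ) : Set (List Bool) :=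
  {σ | (Code.evaln s (Denumerable.ofNat Code e) (Encodable.encode σ)).isSome}

theorem ceSetStage_mono (e : ℕ) : Monotone (ceSetStage e) := by
  intro s s' hs σ hσ
  obtain ⟨x, hx⟩ := Option.isSome_iff_exists.mp hσ
  exact Option.isSome_iff_exists.mpr ⟨x, Code.evaln_mono hs hx⟩

theorem iUnion_ceSetStage (e : ℕ) : ⋃ s, ceSetStage e s = ceSet e := by
  ext σ
  simp only [Set.mem_iUnion, ceSetStage, ceSet, Set.mem_ofPred_eq, Option.isSome_iff_exists,
    Part.dom_iff_mem, Code.evaln_complete]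
  exact ⟨fun ⟨s, x, hx⟩ => ⟨x, s, hx⟩, fun ⟨x, s, hx⟩ => ⟨s, x, hx⟩⟩

def stringsUpTo : ℕ → List (List Bool)
  | 0 => [[]]
  | L + 1 => [] :: (stringsUpTo L).flatMap fun σ => [false :: σ, true :: σ]

theorem mem_stringsUpTo {L : ℕ} {σ : List Bool} : σ ∈ stringsUpTo L ↔ σ.length ≤ L := by
  induction L generalizing σ with
  | zero => simp [stringsUpTo, List.length_eq_zero_iff]
  | succ L ih =>
    cases σ with
    | nil => simp [stringsUpTo]
    | cons b τ => cases b <;> simp [stringsUpTo, ih]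

def IsGoodExtension (e L s : ℕ) (t : List Bool) : Prop :=
  ∀ σ ∈ stringsUpTo L, MeetsStr (σ ++ t) (ceSetStage e s)

theorem exists_isGoodExtension {e : ℕ} (hd : DenseStrings (ceSet e)) (L : ℕ) :
    ∃ t s, IsGoodExtension e L s t := by
  obtain ⟨t, ht⟩ := hd.exists_forall_meetsStr_append (stringsUpTo L)
  rw [← iUnion_ceSetStage] at ht
  obtain ⟨s, hs⟩ := (ceSetStage_mono e).exists_forall_meetsStr
    (A := (stringsUpTo L).map (· ++ t)) (by simpa using ht)
  exact ⟨t, s, by simpa [IsGoodExtension] using hs⟩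

theorem IsGoodExtension.meetsStr {e L s : ℕ} {t : List Bool} (h : IsGoodExtension e L s t)
    {σ : List Bool} (hσ : σ.length ≤ L) : MeetsStr (σ ++ t) (ceSet e) :=
  (h σ (mem_stringsUpTo.mpr hσ)).mono (iUnion_ceSetStage e ▸ Set.subset_iUnion _ s)

open Classical in
noncomputable def findExtension (e L : ℕ) : Part (List Bool) :=
  Nat.rfindOpt fun k => (Encodable.decode (α := List Bool × ℕ) k).bind fun p =>
    if IsGoodExtension e L p.2 p.1 then some p.1 else none

theorem findExtension_spec {e L : ℕ} {t : List Bool} (h : t ∈ findExtension e L) :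
    ∃ s, IsGoodExtension e L s t := by
  obtain ⟨k, hk⟩ := Nat.rfindOpt_spec h
  obtain ⟨⟨t', s⟩, -, hk⟩ := Option.mem_bind_iff.mp hk
  split_ifs at hk with hgood
  · cases Option.mem_some_iff.mp hk
    exact ⟨s, hgood⟩
  · cases hk

theorem findExtension_dom {e : ℕ} (hd : DenseStrings (ceSet e)) (L : ℕ) :
    (findExtension e L).Dom := by
  obtain ⟨t, s, h⟩ := exists_isGoodExtension hd L
  refine Nat.rfindOpt_dom.mpr ⟨Encodable.encode (t, s), t, ?_⟩
  simp [h]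

noncomputable def suitableLength (e : ℕ) : ℕ → Part ℕ
  | 0 => Part.some 0
  | n + 1 => (suitableLength e n).bind fun L => (findExtension e L).map (L + ·.length)

noncomputable def suitableString (e n : ℕ) : Part (List Bool) :=
  (suitableLength e n).bind (findExtension e)

theorem suitableLength_dom {e : ℕ} (hd : DenseStrings (ceSet e)) (n : ℕ) :
    (suitableLength e n).Dom := by
  induction n with
  | zero => trivial
  | succ n ih => exact ⟨ih, findExtension_dom hd _⟩

theorem suitableString_dom {e : ℕ} (hd : DenseStrings (ceSet e)) (n : ℕ) :
    (suitableString e n).Dom :=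
  ⟨suitableLength_dom hd n, findExtension_dom hd _⟩

theorem suitableFor_of_mem {e : ℕ} {T : ℕ → List Bool} {L : ℕ → ℕ}
    (hT : ∀ n, T n ∈ suitableString e n) (hL : ∀ n, L n ∈ suitableLength e n) :
    SuitableFor (ceSet e) L T := by
  have hstep : ∀ n, T n ∈ findExtension e (L n) := fun n => by
    obtain ⟨L', hL', hT'⟩ := Part.mem_bind_iff.mp (hT n)
    rwa [Part.mem_unique hL' (hL n)] at hT'
  refine ⟨Part.mem_unique (hL 0) (Part.mem_some 0), fun n => ?_, fun X n m hm => ?_⟩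
  · exact Part.mem_unique (hL (n + 1)) (Part.mem_bind (hL n) (Part.mem_map _ (hstep n)))
  · obtain ⟨s, hs⟩ := findExtension_spec (hstep n)
    exact hs.meetsStr (by simpa using hm)

section Computability

open Primrec

theorem primrecPred_mem_ceSetStage :
    PrimrecPred fun q : (ℕ × ℕ) × List Bool => q.2 ∈ ceSetStage q.1.1 q.1.2 :=
  (Primrec.eq.comp (option_isSome.comp (Code.primrec_evaln.comp
      (((snd.comp fst).pair ((Primrec.ofNat Code).comp (fst.comp fst))).pair
        (Primrec.encode.comp snd)))) (const true)).of_eq fun _ => Iff.rfl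

theorem primrecPred_meetsStr_ceSetStage :
    PrimrecPred fun q : (ℕ × ℕ) × List Bool => MeetsStr q.2 (ceSetStage q.1.1 q.1.2) :=
  have hprefix : PrimrecRel fun (m : ℕ) (q : (ℕ × ℕ) × List Bool) =>
      q.2.take m ∈ ceSetStage q.1.1 q.1.2 :=
    primrecPred_mem_ceSetStage.comp ((fst.comp snd).pair (list_take.comp fst (snd.comp snd)))
  (hprefix.exists_mem_list.comp (list_range.comp (succ.comp (list_length.comp snd)))
    Primrec.id).of_eq fun _ => meetsStr_iff_exists_take.symm

theorem primrec_stringsUpTo : Primrec stringsUpTo :=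
  (nat_rec₁ [[]] ((list_cons.comp (const []) (list_flatMap snd
      ((list_cons.comp (list_cons.comp (const false) snd)
        (list_cons.comp (list_cons.comp (const true) snd) (const []))).to₂))).to₂)).of_eq
    fun L => by induction L <;> simp_all [stringsUpTo]

theorem primrecPred_isGoodExtension :
    PrimrecPred fun q : (ℕ × ℕ) × (List Bool × ℕ) => IsGoodExtension q.1.1 q.1.2 q.2.2 q.2.1 :=
  have hmeets : PrimrecRel fun (σ : List Bool) (q : (ℕ × ℕ) × (List Bool × ℕ)) =>
      MeetsStr (σ ++ q.2.1) (ceSetStage q.1.1 q.2.2) :=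
    primrecPred_meetsStr_ceSetStage.comp (((fst.comp (fst.comp snd)).pair
      (snd.comp (snd.comp snd))).pair (list_append.comp fst (fst.comp (snd.comp snd))))
  hmeets.forall_mem_list.comp (primrec_stringsUpTo.comp (snd.comp fst)) Primrec.id

theorem partrec₂_findExtension : Partrec₂ findExtension := by
  classical
  refine Partrec.rfindOpt (Primrec.to_comp ?_)
  exact option_bind (Primrec.decode.comp snd)
    (Primrec.ite (primrecPred_isGoodExtension.comp ((fst.comp fst).pair snd))
      (option_some.comp (fst.comp snd)) (const none))

theorem partrec₂_suitableLength : Partrec₂ suitableLength :=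
  (Partrec.nat_rec Computable.snd (Partrec.const' (Part.some 0))
    ((Partrec.map (partrec₂_findExtension.comp (Computable.fst.comp Computable.fst)
      (Computable.snd.comp Computable.snd))
      (Primrec.nat_add.to_comp.comp (Computable.snd.comp (Computable.snd.comp Computable.fst))
        (Computable.list_length.comp Computable.snd)).to₂).to₂)).of_eq
    fun ⟨e, n⟩ => by induction n <;> simp_all [suitableLength]

theorem partrec₂_suitableString : Partrec₂ suitableString :=
  Partrec.bind partrec₂_suitableLength
    (partrec₂_findExtension.comp (Computable.fst.comp Computable.fst) Computable.snd)

end Computability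

theorem exists_uniform_suitable_functions :
    ∃ (t : ℕ → ℕ →. List Bool) (l : ℕ → ℕ →. ℕ),
      Partrec₂ t ∧ Partrec₂ l ∧
      ∀ e, DenseStrings (ceSet e) →
        ∃ (T : ℕ → List Bool) (L : ℕ → ℕ),
          (∀ n, t e n = Part.some (T n) ∧ l e n = Part.some (L n)) ∧
          SuitableFor (ceSet e) L T := by
  refine ⟨suitableString, suitableLength, partrec₂_suitableString, partrec₂_suitableLength,
    fun e hd => ?_⟩
  have hT n := Part.get_mem (suitableString_dom hd n)
  have hL n := Part.get_mem (suitableLength_dom hd n)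
  exact ⟨_, _, fun n => ⟨Part.eq_some_iff.mpr (hT n), Part.eq_some_iff.mpr (hL n)⟩,
    suitableFor_of_mem hT hL⟩
end
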